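/- arXiv:0906.2696 — 2 statements merged into one kernel-verified Lean document; each statement's English description precedes it below -/
import Mathlib

section
/- The 63 projective lines of the E7 root system can be partitioned into nine mutually disjoint sets of seven mutually orthogonal lines, namely the sets Q_0,…,Q_6, Q_+, Q_− described in terms of coordinates indexed by F_7 ∪ {∞}. -/
/-!
All the vectors involved have entries in `{-1, 0, 1}`, so they are real images of sign vectors
`Idx → SignType`, and two nonzero sign vectors span the same line exactly when they agree up to
sign. Up to the factor `1/2`, the `E7` roots are the sign vectors of `e_a - e_b` (`a ≠ b`) and of
`1_S - 1_Sᶜ` (`|S| = 4`). Disjointness, orthogonality and the covering of all `63` lines thus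
reduce to finite checks on the `63` sign vectors of the nine families.
-/

/-- The index set `F₇ ∪ {∞}`; `none` plays the role of `∞`. -/
abbrev Idx : Type := Option (ZMod 7)

/-- The projective line (ray) spanned by a vector. -/
def rayI (v : Idx → ℝ) : Submodule ℝ (Idx → ℝ) := Submodule.span ℝ {v}

/-- Orthogonality of subspaces with respect to the standard inner product. -/
def PerpI (L M : Submodule ℝ (Idx → ℝ)) : Prop :=
  ∀ x ∈ L, ∀ y ∈ M, ∑ i, x i * y i = 0

/-- `λ^(k)`: 1 at `∞`, `−1` at `k`, 0 elsewhere. -/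
def lamV (k : ZMod 7) : Idx → ℝ := fun j =>
  if j = none then 1 else if j = some k then -1 else 0

/-- `μ^(k)`: 1 at positions `∞, k, k+1, k+3` and `−1` at the other four positions. -/
def muV (k : ZMod 7) : Idx → ℝ := fun j =>
  if j = none ∨ j = some k ∨ j = some (k + 1) ∨ j = some (k + 3) then 1 else -1

/-- `ν^(k)`: 1 at positions `∞, k, k−1, k−3` and `−1` at the other four positions. -/
def nuV (k : ZMod 7) : Idx → ℝ := fun j =>
  if j = none ∨ j = some k ∨ j = some (k - 1) ∨ j = some (k - 3) then 1 else -1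

/-- `ξ^(k,i)`: 1 at `k+i`, `−1` at `k−i`, 0 elsewhere. -/
def xiV (k i : ZMod 7) : Idx → ℝ := fun j =>
  if j = some (k + i) then 1 else if j = some (k - i) then -1 else 0

/-- `η^(k,i)`: 1 at positions `∞, k, k+i, k−i` and `−1` at the other four positions. -/
def etaV (k i : ZMod 7) : Idx → ℝ := fun j =>
  if j = none ∨ j = some k ∨ j = some (k + i) ∨ j = some (k - i) then 1 else -1

/-- The `E7` root system modeled on coordinates indexed by `F₇ ∪ {∞}`: the union of
the orbits (under permutations of the coordinates) of a vector with one entry `1`,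
one entry `−1` and six zeros, and of a vector with four entries `1/2` and four
entries `−1/2`. -/
def E7rootsI : Set (Idx → ℝ) :=
  {v | ∃ σ : Equiv.Perm Idx,
    v = lamV 0 ∘ σ ∨ v = ((1 : ℝ) / 2) • (muV 0 ∘ σ)}

/-- The 63 projective lines of the `E7` configuration. -/
def E7linesI : Set (Submodule ℝ (Idx → ℝ)) := rayI '' E7rootsI

/-- `Q_k = {λ^(k), ξ^(k,1), ξ^(k,2), ξ^(k,3), η^(k,1), η^(k,2), η^(k,3)}`. -/
def Q (k : ZMod 7) : Set (Submodule ℝ (Idx → ℝ)) :=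
  {rayI (lamV k), rayI (xiV k 1), rayI (xiV k 2), rayI (xiV k 3),
   rayI (etaV k 1), rayI (etaV k 2), rayI (etaV k 3)}

/-- `Q₊ = {μ^(0), …, μ^(6)}`. -/
def Qp : Set (Submodule ℝ (Idx → ℝ)) := rayI '' Set.range muV

/-- `Q₋ = {ν^(0), …, ν^(6)}`. -/
def Qm : Set (Submodule ℝ (Idx → ℝ)) := rayI '' Set.range nuV

/-- The nine sets `Q₀, …, Q₆, Q₊, Q₋`. -/
def Qfam : Fin 9 → Set (Submodule ℝ (Idx → ℝ)) :=
  ![Q 0, Q 1, Q 2, Q 3, Q 4, Q 5, Q 6, Qp, Qm]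

section SignVectors

variable {α : Type*} [DecidableEq α]

def diffSign (a b : α) : α → SignType := fun j => if j = a then 1 else if j = b then -1 else 0

def setSign (S : Finset α) : α → SignType := fun j => if j ∈ S then 1 else -1

theorem diffSign_comp (a b : α) (σ : Equiv.Perm α) :
    diffSign a b ∘ σ = diffSign (σ.symm a) (σ.symm b) := by
  funext j
  simp only [Function.comp_apply, diffSign, Equiv.eq_symm_apply]

theorem setSign_comp (S : Finset α) (σ : Equiv.Perm α) :
    setSign S ∘ σ = setSign (S.map σ.symm.toEmbedding) := by
  funext j
  simp [setSign, Finset.mem_map_equiv]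

end SignVectors

namespace SignType

theorem sign_cast (s : SignType) : SignType.sign (s : ℝ) = s := by
  cases s <;> simp

theorem eq_or_eq_neg_of_span_cast_eq {ι : Type*} {s t : ι → SignType} (ht : t ≠ 0)
    (h : ℝ ∙ (SignType.cast ∘ s : ι → ℝ) = ℝ ∙ (SignType.cast ∘ t : ι → ℝ)) : t = s ∨ t = -s := by
  have ht_mem : (SignType.cast ∘ t : ι → ℝ) ∈ ℝ ∙ (SignType.cast ∘ s : ι → ℝ) :=
    h ▸ Submodule.mem_span_singleton_self _
  obtain ⟨c, hc⟩ := Submodule.mem_span_singleton.mp ht_mem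
  -- applying `sign` coordinatewise to `c • s = t`
  have ht_eq : t = fun i => SignType.sign c * s i := by
    funext i
    rw [← sign_cast (t i), ← sign_cast (s i), ← sign_mul]
    exact congrArg SignType.sign (congrFun hc i).symm
  rcases h : SignType.sign c with _ | _ | _
  · exact absurd (ht_eq.trans (funext fun i => by simp [h])) ht
  · exact .inr (ht_eq.trans (funext fun i => by simp [h]))
  · exact .inl (ht_eq.trans (funext fun i => by simp [h]))

end SignType

def signRay (s : Idx → SignType) : Submodule ℝ (Idx → ℝ) := rayI (SignType.cast ∘ s)

theorem signRay_neg (s : Idx → SignType) : signRay (-s) = signRay s := by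
  have : (SignType.cast ∘ (-s) : Idx → ℝ) = -(SignType.cast ∘ s) := by
    funext j; simp [SignType.coe_neg]
  rw [signRay, signRay, this, rayI, rayI, ← Set.neg_singleton, Submodule.span_neg]

theorem perpI_rayI {v w : Idx → ℝ} (h : ∑ i, v i * w i = 0) : PerpI (rayI v) (rayI w) := by
  intro x hx y hy
  obtain ⟨a, rfl⟩ := Submodule.mem_span_singleton.mp hx
  obtain ⟨b, rfl⟩ := Submodule.mem_span_singleton.mp hy
  have : ∀ i, (a • v) i * (b • w) i = a * b * (v i * w i) := fun i => by
    simp only [Pi.smul_apply, smul_eq_mul]; ring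
  simp only [this, ← Finset.mul_sum, h, mul_zero]

def qSign (k : ZMod 7) : Fin 7 → Idx → SignType :=
  ![diffSign none (some k),
    diffSign (some (k + 1)) (some (k - 1)), diffSign (some (k + 2)) (some (k - 2)),
    diffSign (some (k + 3)) (some (k - 3)),
    setSign {none, some k, some (k + 1), some (k - 1)},
    setSign {none, some k, some (k + 2), some (k - 2)},
    setSign {none, some k, some (k + 3), some (k - 3)}]

def muSign (k : ZMod 7) : Idx → SignType := setSign {none, some k, some (k + 1), some (k + 3)}

def nuSign (k : ZMod 7) : Idx → SignType := setSign {none, some k, some (k - 1), some (k - 3)}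

-- `muSign` and `nuSign` are indexed by `ZMod 7`, which is definitionally `Fin 7`.
def famSign : Fin 9 → Fin 7 → Idx → SignType :=
  ![qSign 0, qSign 1, qSign 2, qSign 3, qSign 4, qSign 5, qSign 6, muSign, nuSign]

theorem lamV_eq (k : ZMod 7) : lamV k = SignType.cast ∘ diffSign none (some k) := by
  funext j; simp only [lamV, diffSign, Function.comp_apply]; split_ifs <;> simp_all

theorem xiV_eq (k i : ZMod 7) :
    xiV k i = SignType.cast ∘ diffSign (some (k + i)) (some (k - i)) := by
  funext j; simp only [xiV, diffSign, Function.comp_apply]; split_ifs <;> simp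

theorem etaV_eq (k i : ZMod 7) :
    etaV k i = SignType.cast ∘ setSign {none, some k, some (k + i), some (k - i)} := by
  funext j
  simp only [etaV, setSign, Function.comp_apply, Finset.mem_insert, Finset.mem_singleton]
  split_ifs <;> simp

theorem muV_eq (k : ZMod 7) : muV k = SignType.cast ∘ muSign k := by
  funext j
  simp only [muV, muSign, setSign, Function.comp_apply, Finset.mem_insert, Finset.mem_singleton]
  split_ifs <;> simp

theorem nuV_eq (k : ZMod 7) : nuV k = SignType.cast ∘ nuSign k := by
  funext j
  simp only [nuV, nuSign, setSign, Function.comp_apply, Finset.mem_insert, Finset.mem_singleton]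
  split_ifs <;> simp

theorem Q_eq_range (k : ZMod 7) : Q k = Set.range (signRay ∘ qSign k) := by
  rw [Set.range_comp]
  simp only [Q, qSign, Matrix.range_cons, Matrix.range_empty, Set.union_empty,
    Set.singleton_union, Set.image_insert_eq, Set.image_singleton, signRay, lamV_eq, xiV_eq,
    etaV_eq]

theorem Qp_eq_range : Qp = Set.range (signRay ∘ muSign) := by
  rw [Qp, ← Set.range_comp]; congr 1; funext k; simp [signRay, muV_eq]

theorem Qm_eq_range : Qm = Set.range (signRay ∘ nuSign) := by
  rw [Qm, ← Set.range_comp]; congr 1; funext k; simp [signRay, nuV_eq]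

def signRoots : Set (Idx → SignType) :=
  {s | (∃ a b, a ≠ b ∧ s = diffSign a b) ∨ ∃ S : Finset Idx, S.card = 4 ∧ s = setSign S}

theorem E7linesI_eq_image_signRoots : E7linesI = signRay '' signRoots := by
  ext L
  constructor
  · rintro ⟨v, ⟨σ, rfl | rfl⟩, rfl⟩
    · refine ⟨diffSign none (some 0) ∘ σ, Or.inl ⟨_, _, by simp, diffSign_comp _ _ σ⟩, ?_⟩
      rw [signRay, lamV_eq]; rfl
    · refine ⟨muSign 0 ∘ σ, Or.inr ⟨_, by rw [Finset.card_map]; decide, setSign_comp _ σ⟩, ?_⟩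
      rw [rayI, Submodule.span_singleton_smul_eq (by norm_num), muV_eq]; rfl
  · rintro ⟨s, ⟨a, b, hab, rfl⟩ | ⟨S, hS, rfl⟩, rfl⟩
    · obtain ⟨σ, hσ⟩ := Equiv.Perm.exists_extending_pair ![none, some 0] ![a, b]
        (by decide) (fun x y => by fin_cases x <;> fin_cases y <;> simp [hab, hab.symm])
      refine ⟨lamV 0 ∘ σ.symm, ⟨σ.symm, Or.inl rfl⟩, ?_⟩
      have ha : σ none = a := hσ 0
      have hb : σ (some 0) = b := hσ 1
      rw [lamV_eq, Function.comp_assoc, diffSign_comp, Equiv.symm_symm, ha, hb]; rfl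
    · obtain ⟨σ, hσ⟩ := Equiv.Perm.exists_map_finset_eq
        {none, some 0, some (0 + 1), some (0 + 3)} S (by rw [hS]; decide)
      refine ⟨(1 / 2 : ℝ) • (muV 0 ∘ σ.symm), ⟨σ.symm, Or.inr rfl⟩, ?_⟩
      rw [rayI, Submodule.span_singleton_smul_eq (by norm_num), muV_eq, Function.comp_assoc,
        muSign, setSign_comp, Equiv.symm_symm, hσ]; rfl

theorem famSign_ne_zero : ∀ i a, famSign i a ≠ 0 := by decide

theorem famSign_eq_or_eq_neg :
    ∀ i a j b, famSign j b = famSign i a ∨ famSign j b = -famSign i a → i = j ∧ a = b := by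
  decide

theorem famSign_dot : ∀ i a b, a ≠ b → ∑ x, (famSign i a x : ℤ) * famSign i b x = 0 := by
  decide

set_option maxRecDepth 40000 in
theorem famSign_mem_signRoots : ∀ i a, famSign i a ∈ signRoots := by
  simp only [signRoots, Set.mem_ofPred_eq]
  decide

theorem exists_famSign_of_mem_signRoots {s : Idx → SignType} (hs : s ∈ signRoots) :
    ∃ i a, famSign i a = s ∨ famSign i a = -s := by
  have hdiff : ∀ a b : Idx, a ≠ b →
      ∃ i c, famSign i c = diffSign a b ∨ famSign i c = -diffSign a b := by
    set_option maxRecDepth 40000 in decide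
  have hset : ∀ S : Finset Idx, S.card = 4 →
      ∃ i c, famSign i c = setSign S ∨ famSign i c = -setSign S := by
    set_option maxRecDepth 40000 in decide
  rcases hs with ⟨a, b, hab, rfl⟩ | ⟨S, hS, rfl⟩
  exacts [hdiff a b hab, hset S hS]

def e7Line (p : Fin 9 × Fin 7) : Submodule ℝ (Idx → ℝ) := signRay (famSign p.1 p.2)

theorem e7Line_injective : Function.Injective e7Line := by
  rintro ⟨i, a⟩ ⟨j, b⟩ h
  obtain ⟨rfl, rfl⟩ :=
    famSign_eq_or_eq_neg i a j b (SignType.eq_or_eq_neg_of_span_cast_eq (famSign_ne_zero j b) h)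
  rfl

theorem perpI_e7Line (i : Fin 9) {a b : Fin 7} (hab : a ≠ b) :
    PerpI (e7Line (i, a)) (e7Line (i, b)) := by
  apply perpI_rayI
  have := congrArg (Int.cast : ℤ → ℝ) (famSign_dot i a b hab)
  push_cast [SignType.intCast_cast] at this
  exact this

theorem Qfam_eq_range (i : Fin 9) : Qfam i = Set.range fun a => e7Line (i, a) := by
  fin_cases i
  exacts [Q_eq_range 0, Q_eq_range 1, Q_eq_range 2, Q_eq_range 3, Q_eq_range 4, Q_eq_range 5,
    Q_eq_range 6, Qp_eq_range, Qm_eq_range]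

theorem iUnion_Qfam : ⋃ i, Qfam i = Set.range e7Line := by
  ext L
  simp [Qfam_eq_range, Prod.exists]

theorem E7linesI_eq_range : E7linesI = Set.range e7Line := by
  rw [E7linesI_eq_image_signRoots]
  ext L
  constructor
  · rintro ⟨s, hs, rfl⟩
    obtain ⟨i, a, h | h⟩ := exists_famSign_of_mem_signRoots hs
    · exact ⟨(i, a), by rw [e7Line, h]⟩
    · exact ⟨(i, a), by rw [e7Line, h, signRay_neg]⟩
  · rintro ⟨⟨i, a⟩, rfl⟩
    exact ⟨_, famSign_mem_signRoots i a, rfl⟩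

/-- the nine sets `Q₀, …, Q₆, Q₊, Q₋` are pairwise disjoint, each
consists of 7 mutually orthogonal projective lines, and their union is the set of 63
projective lines of `E7`. -/
theorem stmt_6 :
    (∀ i j : Fin 9, i ≠ j → Disjoint (Qfam i) (Qfam j)) ∧
    (∀ i : Fin 9, (Qfam i).ncard = 7 ∧ (Qfam i).Pairwise PerpI) ∧
    (⋃ i : Fin 9, Qfam i) = E7linesI ∧
    E7linesI.ncard = 63 := by
  refine ⟨fun i j hij => ?_, fun i => ⟨?_, ?_⟩, iUnion_Qfam.trans E7linesI_eq_range.symm, ?_⟩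
  · rw [Qfam_eq_range, Qfam_eq_range, Set.disjoint_range_iff]
    exact fun a b h => hij (congrArg Prod.fst (e7Line_injective h))
  · rw [Qfam_eq_range, Set.ncard_range_of_injective (f := fun a => e7Line (i, a))
      (e7Line_injective.comp (Prod.mk_right_injective i))]
    simp
  · rw [Qfam_eq_range]
    rintro _ ⟨a, rfl⟩ _ ⟨b, rfl⟩ hab
    exact perpI_e7Line i (fun h => hab (h ▸ rfl))
  · rw [E7linesI_eq_range, Set.ncard_range_of_injective e7Line_injective]
    simp
end

section
/- In the E7 configuration of 63 projective lines partitioned as Q_1,…,Q_9 (the nine 7-tuples of mutually orthogonal lines), there is no choice of lines l_i ∈ Q_i (i = 1,…,9) such that l_1,…,l_9 are pairwise non-orthogonal; consequently the E7 configuration admits no good bicoloring. -/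
/-- A good bicoloring of the `E7` configuration: every family of 7 mutually
orthogonal lines contains exactly one line with value 1, and no two orthogonal lines
both have value 1. -/
def GoodE7 (v : E7linesI → Bool) : Prop :=
  (∀ M : Finset E7linesI, M.card = 7 →
      ((M : Set E7linesI).Pairwise fun x y => PerpI x.1 y.1) →
      ∃! x : E7linesI, x ∈ M ∧ v x = true) ∧
  (∀ x y : E7linesI, PerpI x.1 y.1 → v x = true → v y = false)

/-! Pairwise non-orthogonal lines `lᵢ ∈ Qᵢ`, spanned by roots of norm `2`, have pairwise
inner products `±1`. Eight of them lie in the hyperplane `∑ x = 0` of `ℝ⁸`, so their Gram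
matrix is singular; but modulo `2` that Gram matrix is `I + J`, whose determinant `1 + 8` is odd.
A good bicoloring would produce such lines by taking the red line of each `Qᵢ`. -/

open Matrix

theorem exists_perm_eq_comp_of_map_univ_eq {α β : Type*} [Fintype α] [DecidableEq β]
    {f g : α → β} (h : Finset.univ.val.map f = Finset.univ.val.map g) :
    ∃ σ : Equiv.Perm α, f = g ∘ σ := by
  classical
  have hfiber (b : β) : Fintype.card {a // f a = b} = Fintype.card {a // g a = b} := by
    have := congrArg (Multiset.count b) h
    simp only [Multiset.count_map] at this
    simpa [Fintype.card_subtype, Finset.card, Finset.filter_val, eq_comm] using this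
  exact ⟨Equiv.ofFiberEquiv fun b => Fintype.equivOfCardEq (hfiber b),
    funext fun a => (Equiv.ofFiberEquiv_map _ a).symm⟩

namespace Matrix

variable {ι : Type*} [Fintype ι] [DecidableEq ι]

theorem odd_det_of_even_diag_of_odd_offDiag (hι : Even (Fintype.card ι)) (G : Matrix ι ι ℤ)
    (hdiag : ∀ i, Even (G i i)) (hoff : Pairwise fun i j => Odd (G i j)) : Odd G.det := by
  have hmod : G.map (Int.castRingHom (ZMod 2)) = 1 + vecMulVec 1 1 := by
    ext i j
    rcases eq_or_ne i j with rfl | hij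
    · simp [ZMod.intCast_eq_zero_iff_even.2 (hdiag i)]
      decide
    · simp [hij, ZMod.intCast_eq_one_iff_odd.2 (hoff hij)]
  rw [← ZMod.intCast_eq_one_iff_odd, ← eq_intCast (Int.castRingHom (ZMod 2)), RingHom.map_det,
    RingHom.mapMatrix_apply, hmod, vecMulVec_eq Unit, det_one_add_replicateCol_mul_replicateRow]
  simp [(ZMod.natCast_eq_zero_iff_even).2 hι]

theorem det_ne_zero_of_diag_eq_two {R : Type*} [CommRing R] [CharZero R]
    (hι : Even (Fintype.card ι)) (G : Matrix ι ι R) (hdiag : ∀ i, G i i = 2)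
    (hoff : Pairwise fun i j => G i j = 1 ∨ G i j = -1) : G.det ≠ 0 := by
  classical
  set N : Matrix ι ι ℤ := of fun i j => if i = j then 2 else if G i j = 1 then 1 else -1
  have hGN : G = N.map (Int.castRingHom R) := by
    ext i j
    rcases eq_or_ne i j with rfl | hij
    · simp [N, hdiag]
    · rcases hoff hij with h | h <;> simp [N, hij, h]
  have hN : Odd N.det := odd_det_of_even_diag_of_odd_offDiag hι N (by simp [N])
    fun i j hij => by by_cases h : G i j = 1 <;> simp [N, hij, h]
  rw [hGN, ← RingHom.mapMatrix_apply, ← RingHom.map_det, eq_intCast, Int.cast_ne_zero]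
  exact fun h => Int.not_even_iff_odd.2 hN (h ▸ Even.zero)

theorem det_gram_eq_zero {K : Type*} [Field K] (v : ι → ι → K) {w : ι → K} (hw : w ≠ 0)
    (hvw : ∀ i, v i ⬝ᵥ w = 0) : (of fun i j => v i ⬝ᵥ v j).det = 0 := by
  have hv : (of v).det = 0 := exists_mulVec_eq_zero_iff.1 ⟨w, hw, funext hvw⟩
  have hgram : of (fun i j => v i ⬝ᵥ v j) = of v * (of v)ᵀ := rfl
  rw [hgram, det_mul, det_transpose, hv, zero_mul]

end Matrix

namespace E7

lemma rayI_smul {a : ℝ} (ha : a ≠ 0) (v : Idx → ℝ) : rayI (a • v) = rayI v :=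
  Submodule.span_singleton_smul_eq (IsUnit.mk0 a ha) v

lemma perpI_rayI_iff (v w : Idx → ℝ) : PerpI (rayI v) (rayI w) ↔ v ⬝ᵥ w = 0 := by
  refine ⟨fun h => h v (Submodule.mem_span_singleton_self v) w
    (Submodule.mem_span_singleton_self w), fun h x hx y hy => ?_⟩
  obtain ⟨a, rfl⟩ := Submodule.mem_span_singleton.1 hx
  obtain ⟨b, rfl⟩ := Submodule.mem_span_singleton.1 hy
  change (a • v) ⬝ᵥ (b • w) = 0
  rw [smul_dotProduct, dotProduct_smul, h, smul_zero, smul_zero]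

lemma rayI_intCast_two_mul (f : Idx → ℤ) :
    rayI (Int.cast ∘ (2 * f)) = rayI (Int.cast ∘ f) := by
  have h2 : (Int.cast ∘ (2 * f) : Idx → ℝ) = (2 : ℝ) • (Int.cast ∘ f) := by ext; simp
  rw [h2, rayI_smul two_ne_zero]

-- Integer copies of the configuration vectors, on which `decide` can evaluate inner products.
def lamZ (k : ZMod 7) : Idx → ℤ := fun j =>
  if j = none then 1 else if j = some k then -1 else 0

def xiZ (k i : ZMod 7) : Idx → ℤ := fun j =>
  if j = some (k + i) then 1 else if j = some (k - i) then -1 else 0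

def etaZ (k i : ZMod 7) : Idx → ℤ := fun j =>
  if j = none ∨ j = some k ∨ j = some (k + i) ∨ j = some (k - i) then 1 else -1

def muZ (k : ZMod 7) : Idx → ℤ := fun j =>
  if j = none ∨ j = some k ∨ j = some (k + 1) ∨ j = some (k + 3) then 1 else -1

def nuZ (k : ZMod 7) : Idx → ℤ := fun j =>
  if j = none ∨ j = some k ∨ j = some (k - 1) ∨ j = some (k - 3) then 1 else -1

lemma lamV_eq (k : ZMod 7) : lamV k = Int.cast ∘ lamZ k := by
  ext j; simp only [lamV, lamZ, Function.comp_apply]; split_ifs <;> simp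

lemma xiV_eq (k i : ZMod 7) : xiV k i = Int.cast ∘ xiZ k i := by
  ext j; simp only [xiV, xiZ, Function.comp_apply]; split_ifs <;> simp

lemma etaV_eq (k i : ZMod 7) : etaV k i = Int.cast ∘ etaZ k i := by
  ext j; simp only [etaV, etaZ, Function.comp_apply]; split_ifs <;> simp

lemma muV_eq (k : ZMod 7) : muV k = Int.cast ∘ muZ k := by
  ext j; simp only [muV, muZ, Function.comp_apply]; split_ifs <;> simp

lemma nuV_eq (k : ZMod 7) : nuV k = Int.cast ∘ nuZ k := by
  ext j; simp only [nuV, nuZ, Function.comp_apply]; split_ifs <;> simp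

/-- `2λ^(k), 2ξ^(k,i), η^(k,i)`: twice the roots spanning the lines of `Q k`, which are integral
even for the half-integral roots `η^(k,i)/2`. -/
def familyZ (k : ZMod 7) : Fin 7 → Idx → ℤ :=
  ![2 * lamZ k, 2 * xiZ k 1, 2 * xiZ k 2, 2 * xiZ k 3, etaZ k 1, etaZ k 2, etaZ k 3]

-- `ZMod 7` is definitionally `Fin 7`, so `muZ` and `nuZ` index `Q₊` and `Q₋` by `Fin 7`.
def rootZ : Fin 9 → Fin 7 → Idx → ℤ :=
  ![familyZ 0, familyZ 1, familyZ 2, familyZ 3, familyZ 4, familyZ 5, familyZ 6,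
    muZ, nuZ]

noncomputable def root (i : Fin 9) (c : Fin 7) : Idx → ℝ := (2⁻¹ : ℝ) • (Int.cast ∘ rootZ i c)

lemma sum_rootZ : ∀ i c, ∑ j, rootZ i c j = 0 := by decide

lemma rootZ_dotProduct_self : ∀ i c, rootZ i c ⬝ᵥ rootZ i c = 8 := by decide

lemma rootZ_dotProduct_of_ne : ∀ i c d, c ≠ d → rootZ i c ⬝ᵥ rootZ i d = 0 := by decide

lemma rootZ_dotProduct_mem : ∀ i j c d, i ≠ j →
    rootZ i c ⬝ᵥ rootZ j d ∈ ({-4, 0, 4} : Finset ℤ) := by decide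

lemma map_rootZ_eq : ∀ i c,
    Finset.univ.val.map (rootZ i c) = Finset.univ.val.map (2 * lamZ 0) ∨
      Finset.univ.val.map (rootZ i c) = Finset.univ.val.map (muZ 0) := by decide

lemma root_dotProduct_root (i j : Fin 9) (c d : Fin 7) :
    root i c ⬝ᵥ root j d = (rootZ i c ⬝ᵥ rootZ j d : ℤ) / 4 := by
  simp only [root, dotProduct, Pi.smul_apply, Function.comp_apply, smul_eq_mul]
  push_cast
  rw [Finset.sum_div]
  exact Finset.sum_congr rfl fun _ _ => by ring

lemma root_dotProduct_self (i : Fin 9) (c : Fin 7) : root i c ⬝ᵥ root i c = 2 := by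
  rw [root_dotProduct_root, rootZ_dotProduct_self]; norm_num

lemma root_dotProduct_of_ne (i : Fin 9) {c d : Fin 7} (hcd : c ≠ d) :
    root i c ⬝ᵥ root i d = 0 := by
  rw [root_dotProduct_root, rootZ_dotProduct_of_ne i c d hcd]; norm_num

lemma root_dotProduct_eq_one_or_neg_one {i j : Fin 9} (hij : i ≠ j) (c d : Fin 7)
    (h : root i c ⬝ᵥ root j d ≠ 0) : root i c ⬝ᵥ root j d = 1 ∨ root i c ⬝ᵥ root j d = -1 := by
  rw [root_dotProduct_root] at h ⊢
  have := rootZ_dotProduct_mem i j c d hij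
  simp only [Finset.mem_insert, Finset.mem_singleton] at this
  rcases this with h4 | h4 | h4
  · right; rw [h4]; norm_num
  · simp [h4] at h
  · left; rw [h4]; norm_num

lemma root_dotProduct_one (i : Fin 9) (c : Fin 7) : root i c ⬝ᵥ 1 = 0 := by
  simp only [dotProduct_one, root, Pi.smul_apply, Function.comp_apply, smul_eq_mul]
  rw [← Finset.mul_sum, ← Int.cast_sum, sum_rootZ, Int.cast_zero, mul_zero]

lemma rayI_root (i : Fin 9) (c : Fin 7) : rayI (root i c) = rayI (Int.cast ∘ rootZ i c) :=
  rayI_smul (by norm_num) _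

lemma Q_eq_range (k : ZMod 7) : Q k = Set.range fun c => rayI (Int.cast ∘ familyZ k c) := by
  ext L
  simp [Q, familyZ, Fin.exists_fin_succ, rayI_intCast_two_mul, lamV_eq, xiV_eq, etaV_eq, eq_comm]

lemma Qp_eq_range : Qp = Set.range fun k => rayI (Int.cast ∘ muZ k) := by
  rw [Qp, ← Set.range_comp]
  simp only [Function.comp_def, muV_eq]

lemma Qm_eq_range : Qm = Set.range fun k => rayI (Int.cast ∘ nuZ k) := by
  rw [Qm, ← Set.range_comp]
  simp only [Function.comp_def, nuV_eq]

lemma Qfam_eq_range (i : Fin 9) : Qfam i = Set.range fun c => rayI (root i c) := by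
  simp only [rayI_root]
  fin_cases i
  exacts [Q_eq_range 0, Q_eq_range 1, Q_eq_range 2, Q_eq_range 3, Q_eq_range 4, Q_eq_range 5,
    Q_eq_range 6, Qp_eq_range, Qm_eq_range]

lemma root_mem_E7rootsI (i : Fin 9) (c : Fin 7) : root i c ∈ E7rootsI := by
  rcases map_rootZ_eq i c with h | h <;> obtain ⟨σ, hσ⟩ := exists_perm_eq_comp_of_map_univ_eq h
  · refine ⟨σ, Or.inl ?_⟩
    ext j; simp [root, hσ, lamV_eq]
  · refine ⟨σ, Or.inr ?_⟩
    ext j; simp [root, hσ, muV_eq]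

lemma rayI_root_mem_E7linesI (i : Fin 9) (c : Fin 7) : rayI (root i c) ∈ E7linesI :=
  ⟨root i c, root_mem_E7rootsI i c, rfl⟩

lemma perpI_rayI_root_of_ne (i : Fin 9) {c d : Fin 7} (hcd : c ≠ d) :
    PerpI (rayI (root i c)) (rayI (root i d)) :=
  (perpI_rayI_iff _ _).2 (root_dotProduct_of_ne i hcd)

lemma rayI_root_injective (i : Fin 9) : Function.Injective fun c => rayI (root i c) := by
  intro c d (hcd : rayI (root i c) = rayI (root i d))
  by_contra hne
  have h := perpI_rayI_root_of_ne i hne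
  rw [← hcd, perpI_rayI_iff, root_dotProduct_self] at h
  exact two_ne_zero h

theorem not_exists_nonorthogonal_transversal :
    ¬ ∃ l : Fin 9 → Submodule ℝ (Idx → ℝ),
      (∀ i, l i ∈ Qfam i) ∧ ∀ i j, i ≠ j → ¬ PerpI (l i) (l j) := by
  rintro ⟨l, hl, hnperp⟩
  choose c hc using fun i => (Qfam_eq_range i ▸ hl i : l i ∈ Set.range _)
  obtain ⟨e⟩ : Nonempty (Idx ↪ Fin 9) := Function.Embedding.nonempty_of_card_le (by simp)
  set u : Idx → Idx → ℝ := fun a => root (e a) (c (e a))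
  refine Matrix.det_ne_zero_of_diag_eq_two (by decide) (of fun a b => u a ⬝ᵥ u b)
    (fun a => root_dotProduct_self _ _) (fun a b hab => ?_)
    (Matrix.det_gram_eq_zero u one_ne_zero fun a => root_dotProduct_one _ _)
  refine root_dotProduct_eq_one_or_neg_one (e.injective.ne hab) _ _ fun h => ?_
  exact hnperp _ _ (e.injective.ne hab) (by rw [← hc, ← hc, perpI_rayI_iff]; exact h)

theorem exists_nonorthogonal_transversal_of_goodE7 {v : E7linesI → Bool} (hv : GoodE7 v) :
    ∃ l : Fin 9 → Submodule ℝ (Idx → ℝ),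
      (∀ i, l i ∈ Qfam i) ∧ ∀ i j, i ≠ j → ¬ PerpI (l i) (l j) := by
  have hred (i : Fin 9) : ∃ c, v ⟨rayI (root i c), rayI_root_mem_E7linesI i c⟩ = true := by
    let F : Fin 7 ↪ E7linesI :=
      ⟨fun c => ⟨rayI (root i c), rayI_root_mem_E7linesI i c⟩,
        fun c d h => rayI_root_injective i (congrArg Subtype.val h)⟩
    obtain ⟨x, ⟨hxF, hx⟩, -⟩ := hv.1 (Finset.univ.map F) (by simp) (by
      simp only [Finset.coe_map, Finset.coe_univ, Set.image_univ]
      rintro _ ⟨c, rfl⟩ _ ⟨d, rfl⟩ hne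
      exact perpI_rayI_root_of_ne i fun h => hne (h ▸ rfl))
    obtain ⟨c, -, rfl⟩ := Finset.mem_map.1 hxF
    exact ⟨c, hx⟩
  choose c hc using hred
  refine ⟨fun i => rayI (root i (c i)), fun i => Qfam_eq_range i ▸ ⟨c i, rfl⟩,
    fun i j _ hperp => ?_⟩
  simpa [hc j] using hv.2 ⟨_, rayI_root_mem_E7linesI i (c i)⟩ ⟨_, rayI_root_mem_E7linesI j (c j)⟩
    hperp (hc i)

end E7

/-- there is no choice of lines `lᵢ ∈ Qᵢ` (one in each member of the
partition `Q₀, …, Q₆, Q₊, Q₋`) which are pairwise non-orthogonal; consequently the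
`E7` configuration admits no good bicoloring. -/
theorem stmt_8 :
    (¬ ∃ l : Fin 9 → Submodule ℝ (Idx → ℝ),
        (∀ i, l i ∈ Qfam i) ∧ ∀ i j, i ≠ j → ¬ PerpI (l i) (l j)) ∧
    ¬ ∃ v : E7linesI → Bool, GoodE7 v :=
  ⟨E7.not_exists_nonorthogonal_transversal, fun ⟨_, hv⟩ =>
    E7.not_exists_nonorthogonal_transversal (E7.exists_nonorthogonal_transversal_of_goodE7 hv)⟩
end
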